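/- For all choices x_i, y_i ∈ K_i (1 ≤ i ≤ N), lim_{m→−∞} d(Y^{x_1...x_N}_{m0}(σ), Y^{y_1...y_N}_{m0}(σ)) = 0 for P_{x_1...x_N}-almost every σ ∈ Σ, where P_{x_1...x_N} is the lift outer measure of (1/N)Σ_i δ_{x_i}. -/

import Mathlib

open MeasureTheory ENNReal Filter

/-- A contractive Markov system on a metric space `K` with vertex type `V` and edge type `E`. -/
structure CMS (E V K : Type*) [Fintype E] [MetricSpace K] [MeasurableSpace K] where
  i : E → V
  t : E → V
  Ks : V → Set K
  w : E → K → K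
  p : E → K → ℝ
  a : ℝ
  ha0 : 0 < a
  ha1 : a < 1
  Ks_nonempty : ∀ v, (Ks v).Nonempty
  Ks_meas : ∀ v, MeasurableSet (Ks v)
  Ks_disj : ∀ v v', v ≠ v' → Disjoint (Ks v) (Ks v')
  Ks_cover : ∀ x : K, ∃ v, x ∈ Ks v
  w_meas : ∀ e, Measurable (w e)
  p_meas : ∀ e, Measurable (p e)
  p_nonneg : ∀ e x, 0 ≤ p e x
  p_sum : ∀ x : K, ∑ e, p e x = 1
  p_zero : ∀ e, ∀ x ∉ Ks (i e), p e x = 0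
  w_maps : ∀ e, Set.MapsTo (w e) (Ks (i e)) (Ks (t e))
  contractive : ∀ v, ∀ x ∈ Ks v, ∀ y ∈ Ks v,
      ∑ e, p e x * dist (w e x) (w e y) ≤ a * dist x y

variable {E V K : Type*} [Fintype E] [MetricSpace K] [MeasurableSpace K]

/-- `S.orbit e m x j = w_{e_{m+j}} ∘ ⋯ ∘ w_{e_m} (x)`. -/
def CMS.orbit (S : CMS E V K) (e : ℤ → E) (m : ℤ) (x : K) : ℕ → K
  | 0 => S.w (e m) x
  | j + 1 => S.w (e (m + j + 1)) (S.orbit e m x j)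

/-- `S.pathProb e m x j = p_{e_m}(x) p_{e_{m+1}}(w_{e_m}x) ⋯ p_{e_{m+j}}(w_{e_{m+j-1}}∘⋯∘w_{e_m}x)`. -/
def CMS.pathProb (S : CMS E V K) (e : ℤ → E) (m : ℤ) (x : K) : ℕ → ℝ
  | 0 => S.p (e m) x
  | j + 1 => S.pathProb e m x j * S.p (e (m + j + 1)) (S.orbit e m x j)

/-- The σ-algebra `𝒜_m` on `Σ = E^ℤ` generated by the coordinates with index `≥ m`. -/
def Am (E : Type*) (m : ℤ) : MeasurableSpace (ℤ → E) :=
  ⨆ (i : ℤ) (_ : m ≤ i), MeasurableSpace.comap (fun σ => σ i) ⊤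

/-- The cylinder `_m[e_m, …, e_{m+j}]`. -/
def cyl (m : ℤ) (j : ℕ) (e : ℤ → E) : Set (ℤ → E) :=
  {σ | ∀ k : ℤ, m ≤ k → k ≤ m + j → σ k = e k}

/-- `P` is the family of Markov measures `P^m_x` on `(Σ, 𝒜_m)` of the CMS `S`. -/
def IsKernel (S : CMS E V K) (P : ∀ m : ℤ, K → @Measure (ℤ → E) (Am E m)) : Prop :=
  (∀ (m : ℤ) (x : K), @IsProbabilityMeasure _ (Am E m) (P m x)) ∧
  ∀ (m : ℤ) (x : K) (e : ℤ → E) (j : ℕ),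
    P m x (cyl m j e) = ENNReal.ofReal (S.pathProb e m x j)

/-- The `m`-th lift `Φ_m(ν)(A) = ∫ P^m_x(A) dν(x)`. -/
noncomputable def liftMeas (P : ∀ m : ℤ, K → @Measure (ℤ → E) (Am E m))
    (m : ℤ) (ν : Measure K) (A : Set (ℤ → E)) : ℝ≥0∞ :=
  ∫⁻ x, P m x A ∂ν

/-- The lift outer measure `Φ(ν)`, via coverings `B ⊆ ⋃_{m ≤ 0} A_m`, `A_m ∈ 𝒜_m` (indexed by `m = -n`). -/
noncomputable def PhiM (P : ∀ m : ℤ, K → @Measure (ℤ → E) (Am E m))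
    (ν : Measure K) (B : Set (ℤ → E)) : ℝ≥0∞ :=
  ⨅ (A : ℕ → Set (ℤ → E)) (_ : ∀ n : ℕ, MeasurableSet[Am E (-(n : ℤ))] (A n))
    (_ : B ⊆ ⋃ n, A n), ∑' n : ℕ, liftMeas P (-(n : ℤ)) ν (A n)

/-- `Y^{x_1…x_N}_{m0}(σ) = w_{σ_0}∘⋯∘w_{σ_m}(x_{i(σ_m)})`. -/
noncomputable def CMS.Y (S : CMS E V K) (xs : V → K) (m : ℤ) (σ : ℤ → E) : K :=
  S.orbit σ m (xs (S.i (σ m))) (-m).toNat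

/-- The uniform measure `(1/N) ∑_i δ_{x_i}`. -/
noncomputable def unif [Fintype V] (xs : V → K) : Measure K :=
  ((Fintype.card V : ℝ≥0∞))⁻¹ • ∑ v : V, Measure.dirac (xs v)

/-- The measure `P^m_{x_1…x_N} = Φ_m((1/N)∑δ_{x_i}) = (1/N)∑_i P^m_{x_i}`. -/
noncomputable def PmMix [Fintype V] (P : ∀ m : ℤ, K → @Measure (ℤ → E) (Am E m))
    (xs : V → K) (m : ℤ) : @Measure (ℤ → E) (Am E m) :=
  ((Fintype.card V : ℝ≥0∞))⁻¹ • ∑ v : V, P m (xs v)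

/-!
Fix `c > 0` and put `b = √a < 1`. Whether `d(Y^x_{-n,0}(σ), Y^y_{-n,0}(σ)) ≥ c bⁿ` depends only
on the coordinates `σ_{-n}, …, σ_0`, so this event is a finite union of cylinders and lies in
`𝒜_{-n}`. Iterating the contraction inequality along all words gives
`E_{x_v}[d(orbit of x_v, orbit of y_v)] ≤ a^{n+1} d(x_v, y_v)`, and Markov's inequality bounds the
`Φ_{-n}`-mass of the event by `(a D / c) bⁿ` with `D = ∑_v d(x_v, y_v)`. Every non-convergent `σ`
lies in one of these events, because `c bⁿ → 0`; hence the outer measure of the non-convergence set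
is at most `a D / (c (1 - b))` for every `c`, i.e. zero.
-/

section Words

variable {α : Type*}

theorem mem_cyl_iff_eqOn {m : ℤ} {j : ℕ} {σ e : ℤ → α} :
    σ ∈ cyl m j e ↔ Set.EqOn σ e (Set.Icc m (m + j)) :=
  ⟨fun h _ hk => h _ hk.1 hk.2, fun h _ hk₁ hk₂ => h ⟨hk₁, hk₂⟩⟩

theorem measurableSet_cyl (m : ℤ) (j : ℕ) (e : ℤ → α) : MeasurableSet[Am α m] (cyl m j e) := by
  have hcyl : cyl m j e = ⋂ k ∈ Set.Icc m (m + j), (fun σ : ℤ → α => σ k) ⁻¹' {e k} := by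
    ext σ
    simp [mem_cyl_iff_eqOn, Set.EqOn]
  rw [hcyl]
  refine MeasurableSet.biInter (Set.to_countable _) fun k hk => ?_
  exact le_iSup₂ (f := fun i (_ : m ≤ i) => MeasurableSpace.comap (fun σ : ℤ → α => σ i) ⊤) k hk.1
    _ ⟨{e k}, trivial, rfl⟩

/-- Continued constantly outside the positions `m, …, m + j`, so that no default letter of `α`
is needed. -/
def wordSeq (m : ℤ) {j : ℕ} (f : Fin (j + 1) → α) (k : ℤ) : α :=
  f ⟨min (k - m).toNat j, Nat.lt_succ_of_le (min_le_right _ _)⟩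

theorem wordSeq_self (m : ℤ) {j : ℕ} (f : Fin (j + 1) → α) : wordSeq m f m = f 0 := by
  simp [wordSeq]

theorem wordSeq_snoc_of_le (m : ℤ) {j : ℕ} (h : Fin (j + 1) → α) (e : α) {k : ℤ}
    (hk : k ≤ m + j) : wordSeq m (Fin.snoc h e : Fin (j + 2) → α) k = wordSeq m h k := by
  have hidx : (⟨min (k - m).toNat (j + 1), by omega⟩ : Fin (j + 2)) =
      Fin.castSucc ⟨min (k - m).toNat j, by omega⟩ := Fin.ext (by simp; omega)
  simp only [wordSeq, hidx, Fin.snoc_castSucc]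

theorem wordSeq_snoc_succ (m : ℤ) {j : ℕ} (h : Fin (j + 1) → α) (e : α) :
    wordSeq m (Fin.snoc h e : Fin (j + 2) → α) (m + j + 1) = e := by
  have hidx : (⟨min (m + j + 1 - m).toNat (j + 1), by omega⟩ : Fin (j + 2)) = Fin.last _ :=
    Fin.ext (by simp; omega)
  simp only [wordSeq, hidx, Fin.snoc_last]

theorem mem_cyl_wordSeq (m : ℤ) (j : ℕ) (σ : ℤ → α) :
    σ ∈ cyl m j (wordSeq m fun i : Fin (j + 1) => σ (m + i)) := by
  refine mem_cyl_iff_eqOn.2 fun k hk => congrArg σ ?_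
  simp only [Set.mem_Icc] at hk
  dsimp only
  omega

theorem setOf_eq_biUnion_cyl [Fintype α] (m : ℤ) (j : ℕ) {Q : (ℤ → α) → Prop}
    [DecidablePred Q] (hQ : ∀ σ σ', Set.EqOn σ σ' (Set.Icc m (m + j)) → Q σ → Q σ') :
    {σ | Q σ} = ⋃ f ∈ Finset.univ.filter (fun f : Fin (j + 1) → α => Q (wordSeq m f)),
      cyl m j (wordSeq m f) := by
  ext σ
  simp only [Set.mem_ofPred_eq, Set.mem_iUnion, Finset.mem_filter, Finset.mem_univ, true_and,
    exists_prop]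
  constructor
  · intro hσ
    have hcyl := mem_cyl_wordSeq m j σ
    exact ⟨_, hQ _ _ (mem_cyl_iff_eqOn.1 hcyl) hσ, hcyl⟩
  · rintro ⟨f, hf, hσ⟩
    exact hQ _ _ (mem_cyl_iff_eqOn.1 hσ).symm hf

theorem measurableSet_setOf_of_eqOn [Finite α] (m : ℤ) (j : ℕ) {Q : (ℤ → α) → Prop}
    (hQ : ∀ σ σ', Set.EqOn σ σ' (Set.Icc m (m + j)) → Q σ → Q σ') :
    MeasurableSet[Am α m] {σ | Q σ} := by
  classical
  have := Fintype.ofFinite α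
  rw [setOf_eq_biUnion_cyl m j hQ]
  exact @Finset.measurableSet_biUnion _ _ (Am α m) _ _ fun f _ => measurableSet_cyl m j _

end Words

theorem liftMeas_unif_le_sum {α X ι : Type*} [MeasurableSpace X] [MeasurableSingletonClass X]
    [Fintype ι] (P : ∀ m : ℤ, X → @Measure (ℤ → α) (Am α m)) (m : ℤ) (xs : ι → X)
    (A : Set (ℤ → α)) : liftMeas P m (unif xs) A ≤ ∑ i, P m (xs i) A := by
  rw [liftMeas, unif, lintegral_smul_measure, lintegral_finsetSum_measure]
  simp only [lintegral_dirac, smul_eq_mul]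
  rcases isEmpty_or_nonempty ι with hι | hι
  · simp
  exact mul_le_of_le_one_left zero_le <| ENNReal.inv_le_one.2 <| by
    exact_mod_cast Fintype.card_pos

theorem PhiM_le_tsum {α X : Type*} [MeasurableSpace X]
    (P : ∀ m : ℤ, X → @Measure (ℤ → α) (Am α m)) (ν : Measure X) {B : Set (ℤ → α)}
    {A : ℕ → Set (ℤ → α)} (hA : ∀ n : ℕ, MeasurableSet[Am α (-n)] (A n)) (hB : B ⊆ ⋃ n, A n) :
    PhiM P ν B ≤ ∑' n : ℕ, liftMeas P (-n) ν (A n) :=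
  iInf₂_le_of_le A hA (iInf_le _ hB)

theorem exists_le_of_not_tendsto_zero {u ε : ℕ → ℝ} (hu : ∀ n, 0 ≤ u n)
    (hε : Tendsto ε atTop (nhds 0)) (h : ¬Tendsto u atTop (nhds 0)) : ∃ n, ε n ≤ u n := by
  by_contra! hlt
  exact h (squeeze_zero hu (fun n => (hlt n).le) hε)

namespace CMS

variable (S : CMS E V K)

theorem sqrt_a_lt_one : √S.a < 1 :=
  (Real.sqrt_lt' one_pos).2 (by simpa using S.ha1)

theorem i_eq_of_p_ne_zero {e : E} {v : V} {x : K} (hx : x ∈ S.Ks v) (hp : S.p e x ≠ 0) :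
    S.i e = v := by
  by_contra hne
  exact Set.disjoint_left.1 (S.Ks_disj _ _ hne) (by_contra fun h => hp (S.p_zero e x h)) hx

theorem pathProb_nonneg (e : ℤ → E) (m : ℤ) (x : K) (j : ℕ) : 0 ≤ S.pathProb e m x j := by
  induction j with
  | zero => exact S.p_nonneg _ _
  | succ j ih => exact mul_nonneg ih (S.p_nonneg _ _)

theorem p_ne_zero_of_pathProb_ne_zero {e : ℤ → E} {m : ℤ} {x : K} {j : ℕ}
    (h : S.pathProb e m x j ≠ 0) : S.p (e m) x ≠ 0 := by
  induction j with
  | zero => exact h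
  | succ j ih => exact ih (left_ne_zero_of_mul h)

theorem orbit_congr {e e' : ℤ → E} {m : ℤ} (x : K) {j : ℕ}
    (h : Set.EqOn e e' (Set.Icc m (m + j))) : S.orbit e m x j = S.orbit e' m x j := by
  induction j with
  | zero => simp [orbit, h ⟨le_rfl, by simp⟩]
  | succ j ih =>
    have hlast : e (m + j + 1) = e' (m + j + 1) := h ⟨by omega, by push_cast; omega⟩
    simp only [orbit, hlast, ih (h.mono (Set.Icc_subset_Icc_right (by push_cast; omega)))]

theorem pathProb_congr {e e' : ℤ → E} {m : ℤ} (x : K) {j : ℕ}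
    (h : Set.EqOn e e' (Set.Icc m (m + j))) : S.pathProb e m x j = S.pathProb e' m x j := by
  induction j with
  | zero => simp [pathProb, h ⟨le_rfl, by simp⟩]
  | succ j ih =>
    have hinit : Set.EqOn e e' (Set.Icc m (m + j)) :=
      h.mono (Set.Icc_subset_Icc_right (by push_cast; omega))
    have hlast : e (m + j + 1) = e' (m + j + 1) := h ⟨by omega, by push_cast; omega⟩
    simp only [pathProb, hlast, ih hinit, S.orbit_congr x hinit]

theorem exists_orbit_mem_Ks {v : V} {x y : K} (hx : x ∈ S.Ks v) (hy : y ∈ S.Ks v)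
    {e : ℤ → E} {m : ℤ} {j : ℕ} (h : S.pathProb e m x j ≠ 0) :
    ∃ u, S.orbit e m x j ∈ S.Ks u ∧ S.orbit e m y j ∈ S.Ks u := by
  induction j with
  | zero =>
    have hv := S.i_eq_of_p_ne_zero hx h
    exact ⟨_, S.w_maps _ (hv ▸ hx), S.w_maps _ (hv ▸ hy)⟩
  | succ j ih =>
    obtain ⟨u, hxu, hyu⟩ := ih (left_ne_zero_of_mul h)
    have hu := S.i_eq_of_p_ne_zero hxu (right_ne_zero_of_mul h)
    exact ⟨_, S.w_maps _ (hu ▸ hxu), S.w_maps _ (hu ▸ hyu)⟩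

theorem Y_neg_natCast (xs : V → K) (n : ℕ) (σ : ℤ → E) :
    S.Y xs (-n) σ = S.orbit σ (-n) (xs (S.i (σ (-n)))) n := by
  simp [Y]

theorem Y_congr (xs : V → K) {n : ℕ} {σ σ' : ℤ → E}
    (h : Set.EqOn σ σ' (Set.Icc (-n) (-n + n))) : S.Y xs (-n) σ = S.Y xs (-n) σ' := by
  rw [Y_neg_natCast, Y_neg_natCast, h ⟨le_rfl, by omega⟩, S.orbit_congr _ h]

theorem Y_eq_orbit_of_pathProb_ne_zero {v : V} {x : K} (hx : x ∈ S.Ks v) (zs : V → K)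
    {n : ℕ} {σ : ℤ → E} (h : S.pathProb σ (-n) x n ≠ 0) :
    S.Y zs (-n) σ = S.orbit σ (-n) (zs v) n := by
  rw [Y_neg_natCast, S.i_eq_of_p_ne_zero hx (S.p_ne_zero_of_pathProb_ne_zero h)]

theorem sum_pathProb_snoc_mul_dist_le {v : V} {x y : K} (hx : x ∈ S.Ks v) (hy : y ∈ S.Ks v)
    (m : ℤ) {j : ℕ} (h : Fin (j + 1) → E) :
    ∑ e : E, S.pathProb (wordSeq m (Fin.snoc h e : Fin (j + 2) → E)) m x (j + 1) *
        dist (S.orbit (wordSeq m (Fin.snoc h e : Fin (j + 2) → E)) m x (j + 1))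
          (S.orbit (wordSeq m (Fin.snoc h e : Fin (j + 2) → E)) m y (j + 1))
      ≤ S.a * (S.pathProb (wordSeq m h) m x j *
        dist (S.orbit (wordSeq m h) m x j) (S.orbit (wordSeq m h) m y j)) := by
  set q := S.pathProb (wordSeq m h) m x j
  set x' := S.orbit (wordSeq m h) m x j
  set y' := S.orbit (wordSeq m h) m y j
  have hterm : ∀ e : E,
      S.pathProb (wordSeq m (Fin.snoc h e : Fin (j + 2) → E)) m x (j + 1) *
          dist (S.orbit (wordSeq m (Fin.snoc h e : Fin (j + 2) → E)) m x (j + 1))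
            (S.orbit (wordSeq m (Fin.snoc h e : Fin (j + 2) → E)) m y (j + 1))
        = q * (S.p e x' * dist (S.w e x') (S.w e y')) := by
    intro e
    have hinit : Set.EqOn (wordSeq m (Fin.snoc h e : Fin (j + 2) → E)) (wordSeq m h)
        (Set.Icc m (m + j)) := fun k hk => wordSeq_snoc_of_le m h e hk.2
    simp only [pathProb, orbit, S.pathProb_congr x hinit, S.orbit_congr x hinit,
      S.orbit_congr y hinit, wordSeq_snoc_succ]
    ring
  rw [Finset.sum_congr rfl fun e _ => hterm e, ← Finset.mul_sum]
  rcases eq_or_ne q 0 with hq | hq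
  · simp [hq]
  obtain ⟨u, hxu, hyu⟩ := S.exists_orbit_mem_Ks hx hy hq
  calc q * ∑ e, S.p e x' * dist (S.w e x') (S.w e y')
      ≤ q * (S.a * dist x' y') := by
        gcongr
        exacts [S.pathProb_nonneg _ _ _ _, S.contractive u x' hxu y' hyu]
    _ = S.a * (q * dist x' y') := by ring

theorem sum_pathProb_mul_dist_orbit_le {v : V} {x y : K} (hx : x ∈ S.Ks v) (hy : y ∈ S.Ks v)
    (m : ℤ) (j : ℕ) :
    ∑ f : Fin (j + 1) → E, S.pathProb (wordSeq m f) m x j *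
        dist (S.orbit (wordSeq m f) m x j) (S.orbit (wordSeq m f) m y j)
      ≤ S.a ^ (j + 1) * dist x y := by
  induction j with
  | zero =>
    rw [← (Equiv.funUnique (Fin 1) E).symm.sum_comp]
    simpa [pathProb, orbit, wordSeq_self] using S.contractive v x hx y hy
  | succ j ih =>
    rw [← (Fin.snocEquiv fun _ => E).sum_comp, Fintype.sum_prod_type_right]
    calc _ ≤ ∑ h : Fin (j + 1) → E, S.a * (S.pathProb (wordSeq m h) m x j *
            dist (S.orbit (wordSeq m h) m x j) (S.orbit (wordSeq m h) m y j)) :=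
          Finset.sum_le_sum fun h _ => S.sum_pathProb_snoc_mul_dist_le hx hy m h
      _ ≤ S.a * (S.a ^ (j + 1) * dist x y) := by
          rw [← Finset.mul_sum]
          exact mul_le_mul_of_nonneg_left ih S.ha0.le
      _ = S.a ^ (j + 1 + 1) * dist x y := by ring

end CMS

theorem IsKernel.measure_setOf_le_dist_Y_le {S : CMS E V K}
    {P : ∀ m : ℤ, K → @Measure (ℤ → E) (Am E m)} (hP : IsKernel S P) {xs ys : V → K} {v : V}
    (hx : xs v ∈ S.Ks v) (hy : ys v ∈ S.Ks v) (n : ℕ) {t : ℝ} (ht : 0 < t) :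
    P (-n) (xs v) {σ | t ≤ dist (S.Y xs (-n) σ) (S.Y ys (-n) σ)}
      ≤ ENNReal.ofReal (S.a ^ (n + 1) * dist (xs v) (ys v) / t) := by
  classical
  set m : ℤ := -n
  let q : (Fin (n + 1) → E) → ℝ := fun f => S.pathProb (wordSeq m f) m (xs v) n
  let d : (Fin (n + 1) → E) → ℝ := fun f =>
    dist (S.orbit (wordSeq m f) m (xs v) n) (S.orbit (wordSeq m f) m (ys v) n)
  rw [setOf_eq_biUnion_cyl m n fun σ σ' h hσ => by rwa [← S.Y_congr xs h, ← S.Y_congr ys h]]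
  set bad := Finset.univ.filter fun f : Fin (n + 1) → E =>
    t ≤ dist (S.Y xs m (wordSeq m f)) (S.Y ys m (wordSeq m f))
  have hq_le (f) (hf : f ∈ bad) : q f ≤ q f * d f / t := by
    rcases eq_or_ne (q f) 0 with h0 | h0
    · simp [h0]
    have hdist := (Finset.mem_filter.1 hf).2
    rw [S.Y_eq_orbit_of_pathProb_ne_zero hx xs h0, S.Y_eq_orbit_of_pathProb_ne_zero hx ys h0]
      at hdist
    rw [le_div_iff₀ ht]
    exact mul_le_mul_of_nonneg_left hdist (S.pathProb_nonneg _ _ _ _)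
  calc _ ≤ ∑ f ∈ bad, P m (xs v) (cyl m n (wordSeq m f)) := measure_biUnion_finset_le _ _
    _ = ∑ f ∈ bad, ENNReal.ofReal (q f) := Finset.sum_congr rfl fun f _ => hP.2 m (xs v) _ n
    _ ≤ ∑ f ∈ bad, ENNReal.ofReal (q f * d f / t) :=
        Finset.sum_le_sum fun f hf => ENNReal.ofReal_le_ofReal (hq_le f hf)
    _ ≤ ∑ f, ENNReal.ofReal (q f * d f / t) :=
        Finset.sum_le_sum_of_subset (Finset.subset_univ bad)
    _ = ENNReal.ofReal ((∑ f, q f * d f) / t) := by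
        rw [Finset.sum_div, ENNReal.ofReal_sum_of_nonneg fun f _ =>
          div_nonneg (mul_nonneg (S.pathProb_nonneg _ _ _ _) dist_nonneg) ht.le]
    _ ≤ ENNReal.ofReal (S.a ^ (n + 1) * dist (xs v) (ys v) / t) :=
        ENNReal.ofReal_le_ofReal <|
          div_le_div_of_nonneg_right (S.sum_pathProb_mul_dist_orbit_le hx hy m n) ht.le

theorem IsKernel.liftMeas_unif_setOf_le_dist_Y_le [Fintype V] [BorelSpace K] {S : CMS E V K}
    {P : ∀ m : ℤ, K → @Measure (ℤ → E) (Am E m)} (hP : IsKernel S P) {xs ys : V → K}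
    (hxs : ∀ v, xs v ∈ S.Ks v) (hys : ∀ v, ys v ∈ S.Ks v) (n : ℕ) {t : ℝ} (ht : 0 < t) :
    liftMeas P (-n) (unif xs) {σ | t ≤ dist (S.Y xs (-n) σ) (S.Y ys (-n) σ)}
      ≤ ENNReal.ofReal (S.a ^ (n + 1) * (∑ v, dist (xs v) (ys v)) / t) := by
  calc _ ≤ ∑ v, ENNReal.ofReal (S.a ^ (n + 1) * dist (xs v) (ys v) / t) :=
        (liftMeas_unif_le_sum P _ xs _).trans <| Finset.sum_le_sum fun v _ =>
          hP.measure_setOf_le_dist_Y_le (hxs v) (hys v) n ht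
    _ = _ := by
        rw [← ENNReal.ofReal_sum_of_nonneg fun v _ =>
          div_nonneg (mul_nonneg (pow_nonneg S.ha0.le _) dist_nonneg) ht.le,
          ← Finset.sum_div, Finset.mul_sum]

theorem IsKernel.PhiM_setOf_not_tendsto_le [Fintype V] [BorelSpace K] {S : CMS E V K}
    {P : ∀ m : ℤ, K → @Measure (ℤ → E) (Am E m)} (hP : IsKernel S P) {xs ys : V → K}
    (hxs : ∀ v, xs v ∈ S.Ks v) (hys : ∀ v, ys v ∈ S.Ks v) {c : ℝ} (hc : 0 < c) :
    PhiM P (unif xs) {σ : ℤ → E |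
        ¬ Tendsto (fun n : ℕ => dist (S.Y xs (-n) σ) (S.Y ys (-n) σ)) atTop (nhds 0)}
      ≤ ENNReal.ofReal (S.a * (∑ v, dist (xs v) (ys v)) / c) *
        (1 - ENNReal.ofReal √S.a)⁻¹ := by
  set b := √S.a
  set D := ∑ v, dist (xs v) (ys v)
  have hb : 0 < b := Real.sqrt_pos.2 S.ha0
  have hab : S.a = b ^ 2 := (Real.sq_sqrt S.ha0.le).symm
  have hD : 0 ≤ D := Finset.sum_nonneg fun _ _ => dist_nonneg
  have hmeas (n : ℕ) : MeasurableSet[Am E (-n)]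
      {σ | c * b ^ n ≤ dist (S.Y xs (-n) σ) (S.Y ys (-n) σ)} :=
    measurableSet_setOf_of_eqOn (-n) n fun σ σ' h hσ => by
      rwa [← S.Y_congr xs h, ← S.Y_congr ys h]
  have hcover : {σ : ℤ → E |
        ¬ Tendsto (fun n : ℕ => dist (S.Y xs (-n) σ) (S.Y ys (-n) σ)) atTop (nhds 0)}
      ⊆ ⋃ n : ℕ, {σ | c * b ^ n ≤ dist (S.Y xs (-n) σ) (S.Y ys (-n) σ)} := fun σ hσ =>
    Set.mem_iUnion.2 <| exists_le_of_not_tendsto_zero (fun _ => dist_nonneg)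
      (by simpa using (tendsto_pow_atTop_nhds_zero_of_lt_one hb.le
        S.sqrt_a_lt_one).const_mul c) hσ
  have hterm (n : ℕ) : ENNReal.ofReal (S.a ^ (n + 1) * D / (c * b ^ n))
      = ENNReal.ofReal (S.a * D / c) * ENNReal.ofReal b ^ n := by
    rw [← ENNReal.ofReal_pow hb.le,
      ← ENNReal.ofReal_mul (div_nonneg (mul_nonneg S.ha0.le hD) hc.le)]
    congr 1
    rw [hab]
    field_simp
    ring
  calc _ ≤ ∑' n : ℕ, liftMeas P (-n) (unif xs)
          {σ | c * b ^ n ≤ dist (S.Y xs (-n) σ) (S.Y ys (-n) σ)} := PhiM_le_tsum P _ hmeas hcover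
    _ ≤ ∑' n : ℕ, ENNReal.ofReal (S.a * D / c) * ENNReal.ofReal b ^ n :=
        ENNReal.tsum_le_tsum fun n =>
          (hP.liftMeas_unif_setOf_le_dist_Y_le hxs hys n (by positivity)).trans_eq (hterm n)
    _ = _ := by rw [ENNReal.tsum_mul_left, ENNReal.tsum_geometric]

theorem statement4_general {E V K : Type*} [Fintype E] [Fintype V] [MetricSpace K]
    [MeasurableSpace K] [BorelSpace K] (S : CMS E V K)
    (P : ∀ m : ℤ, K → @Measure (ℤ → E) (Am E m)) (hP : IsKernel S P)
    (xs ys : V → K) (hxs : ∀ v, xs v ∈ S.Ks v) (hys : ∀ v, ys v ∈ S.Ks v) :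
    PhiM P (unif xs) {σ : ℤ → E |
      ¬ Tendsto (fun n : ℕ => dist (S.Y xs (-(n : ℤ)) σ) (S.Y ys (-(n : ℤ)) σ))
        atTop (nhds 0)} = 0 := by
  have hgeom : (1 - ENNReal.ofReal √S.a)⁻¹ ≠ ∞ :=
    ENNReal.inv_ne_top.2 (tsub_pos_of_lt (ENNReal.ofReal_lt_one.2 S.sqrt_a_lt_one)).ne'
  have hlim : Tendsto (fun c : ℝ => ENNReal.ofReal (S.a * (∑ v, dist (xs v) (ys v)) / c) *
      (1 - ENNReal.ofReal √S.a)⁻¹) atTop (nhds 0) := by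
    simpa using ENNReal.Tendsto.mul_const
      (ENNReal.tendsto_ofReal (tendsto_const_nhds.div_atTop tendsto_id)) (Or.inr hgeom)
  exact le_antisymm (ge_of_tendsto hlim ((eventually_gt_atTop 0).mono fun c hc =>
    hP.PhiM_setOf_not_tendsto_le hxs hys hc)) zero_le

/-- `d(Y^{x_1…x_N}_{m0}(σ), Y^{y_1…y_N}_{m0}(σ)) → 0` as `m → -∞` for
`P_{x_1…x_N}`-almost every `σ`, where `P_{x_1…x_N} = Φ((1/N)∑δ_{x_i})`. -/
theorem statement4 {E V K : Type*} [Fintype E] [Fintype V] [MetricSpace K] [CompleteSpace K]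
    [MeasurableSpace K] [BorelSpace K] (S : CMS E V K)
    (P : ∀ m : ℤ, K → @Measure (ℤ → E) (Am E m)) (hP : IsKernel S P)
    (xs ys : V → K) (hxs : ∀ v, xs v ∈ S.Ks v) (hys : ∀ v, ys v ∈ S.Ks v) :
    PhiM P (unif xs) {σ : ℤ → E |
      ¬ Tendsto (fun n : ℕ => dist (S.Y xs (-(n : ℤ)) σ) (S.Y ys (-(n : ℤ)) σ))
        atTop (nhds 0)} = 0 :=
  statement4_general S P hP xs ys hxs hys
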